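/- The number π² + 1 is an eigenvalue of E'(1/2, 0, 0); indeed the vector v = (0, πi, 0, 1, πi) ∈ ℂ⁵ satisfies E'(1/2,0,0)·v = (π² + 1)·v. On the other hand, π² + 1 is not an eigenvalue of E'(0, 1/2, 0) or of E'(0, −1/2, 0). -/

import Mathlib

/-!
For `B₁ = ±1/2` put `c = 2πiB₁`, so that `c² = -π²`. The system `(E'(0,B₁,0) - (π² + 1)) v = 0`
splits into the blocks `(v₀, v₃)`, `(v₁)` and `(v₂, v₄)`, with determinants `c²`, `-1` and
`c² - 1 = -(π² + 1)`, all nonzero; hence `v = 0`. The eigenvector of `E'(1/2,0,0)` is checked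
entrywise.
-/

noncomputable section

/-- The 5×5 complex matrix E'(A₁,B₁,B₂) from the one-form spectrum computation
on Example IV, where S² = A₁² + B₁² + B₂². -/
def Emat' (A1 B1 B2 : ℝ) : Matrix (Fin 5) (Fin 5) ℂ :=
  let p : ℂ := (Real.pi : ℂ)
  let i : ℂ := Complex.I
  let S2 : ℂ := ((A1 ^ 2 + B1 ^ 2 + B2 ^ 2 : ℝ) : ℂ)
  let a1 : ℂ := (A1 : ℂ)
  let b1 : ℂ := (B1 : ℂ)
  let b2 : ℂ := (B2 : ℂ)
  !![4*p^2*S2, 0, 0, -2*p*i*b1, 0;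
     0, 4*p^2*S2, 0, 2*p*i*a1, -2*p*i*b2;
     0, 0, 4*p^2*S2, 0, 2*p*i*b1;
     2*p*i*b1, -2*p*i*a1, 0, 4*p^2*S2 + 1, 2*p*i*a1;
     0, 2*p*i*b2, -2*p*i*b1, -2*p*i*a1, 4*p^2*S2 + 2]

theorem Emat'_half_zero_zero_mulVec :
    (Emat' (1/2) 0 0).mulVec ![0, Real.pi * Complex.I, 0, 1, Real.pi * Complex.I] =
      ((Real.pi : ℂ) ^ 2 + 1) • ![0, Real.pi * Complex.I, 0, 1, Real.pi * Complex.I] := by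
  ext i
  fin_cases i <;> simp [Emat', Matrix.mulVec, dotProduct, Fin.sum_univ_five] <;> ring_nf

theorem Emat'_zero_mulVec_of_sq_eq {b : ℝ} (hb : b ^ 2 = 1 / 4) (v : Fin 5 → ℂ) :
    (Emat' 0 b 0).mulVec v =
      ![Real.pi ^ 2 * v 0 - 2 * Real.pi * Complex.I * b * v 3,
        Real.pi ^ 2 * v 1,
        Real.pi ^ 2 * v 2 + 2 * Real.pi * Complex.I * b * v 4,
        2 * Real.pi * Complex.I * b * v 0 + (Real.pi ^ 2 + 1) * v 3,
        -(2 * Real.pi * Complex.I * b * v 2) + (Real.pi ^ 2 + 2) * v 4] := by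
  simp only [Emat', zero_pow two_ne_zero, zero_add, add_zero, hb]
  ext i
  fin_cases i <;> simp [Matrix.mulVec, dotProduct, Fin.sum_univ_five, -mul_eq_mul_right_iff]
    <;> ring

theorem eq_zero_of_Emat'_zero_mulVec_eq_pi_sq_add_one_smul {b : ℝ} (hb : b ^ 2 = 1 / 4)
    {v : Fin 5 → ℂ} (h : (Emat' 0 b 0).mulVec v = ((Real.pi : ℂ) ^ 2 + 1) • v) : v = 0 := by
  rw [Emat'_zero_mulVec_of_sq_eq hb] at h
  have hp : (Real.pi : ℂ) ≠ 0 := Complex.ofReal_ne_zero.mpr Real.pi_ne_zero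
  have hev : (Real.pi : ℂ) ^ 2 + 1 ≠ 0 := by
    exact_mod_cast (by positivity : Real.pi ^ 2 + 1 ≠ 0)
  set p : ℂ := (Real.pi : ℂ)
  set c : ℂ := 2 * p * Complex.I * b
  have hc_sq : c ^ 2 = -p ^ 2 := by
    rw [show c ^ 2 = 4 * p ^ 2 * Complex.I ^ 2 * ((b ^ 2 : ℝ) : ℂ) by push_cast; ring, hb,
      Complex.I_sq]
    push_cast; ring
  have hc : c ≠ 0 := by
    rintro hc
    rw [hc, zero_pow two_ne_zero, zero_eq_neg] at hc_sq
    exact hp (pow_eq_zero_iff two_ne_zero |>.mp hc_sq)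
  have h0 : p ^ 2 * v 0 - c * v 3 = (p ^ 2 + 1) * v 0 := by simpa using congrFun h 0
  have h1 : p ^ 2 * v 1 = (p ^ 2 + 1) * v 1 := by simpa using congrFun h 1
  have h2 : p ^ 2 * v 2 + c * v 4 = (p ^ 2 + 1) * v 2 := by simpa using congrFun h 2
  have h3 : c * v 0 + (p ^ 2 + 1) * v 3 = (p ^ 2 + 1) * v 3 := by simpa using congrFun h 3
  have h4 : -(c * v 2) + (p ^ 2 + 2) * v 4 = (p ^ 2 + 1) * v 4 := by simpa using congrFun h 4
  have e0 : v 0 = 0 := (mul_eq_zero.mp (by linear_combination h3)).resolve_left hc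
  have e3 : v 3 = 0 := (mul_eq_zero.mp (by linear_combination -h0 - e0)).resolve_left hc
  have e1 : v 1 = 0 := by linear_combination -h1
  have e4 : v 4 = 0 :=
    (mul_eq_zero.mp (by linear_combination h4 - c * h2 + v 4 * hc_sq)).resolve_left hev
  have e2 : v 2 = 0 := by linear_combination -h2 + c * e4
  ext i
  fin_cases i <;> assumption

/-- π² + 1 is an eigenvalue of E'(1/2,0,0), with eigenvector v = (0, πi, 0, 1, πi);
but π² + 1 is not an eigenvalue of E'(0,1/2,0) or E'(0,−1/2,0). -/
theorem stmt18 :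
    (Emat' (1/2) 0 0).mulVec
        ![0, (Real.pi : ℂ) * Complex.I, 0, 1, (Real.pi : ℂ) * Complex.I] =
      ((Real.pi : ℂ) ^ 2 + 1) •
        ![0, (Real.pi : ℂ) * Complex.I, 0, 1, (Real.pi : ℂ) * Complex.I] ∧
    (![0, (Real.pi : ℂ) * Complex.I, 0, 1, (Real.pi : ℂ) * Complex.I] : Fin 5 → ℂ) ≠ 0 ∧
    (∀ v : Fin 5 → ℂ,
      (Emat' 0 (1/2) 0).mulVec v = ((Real.pi : ℂ) ^ 2 + 1) • v → v = 0) ∧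
    (∀ v : Fin 5 → ℂ,
      (Emat' 0 (-(1/2)) 0).mulVec v = ((Real.pi : ℂ) ^ 2 + 1) • v → v = 0) := by
  refine ⟨Emat'_half_zero_zero_mulVec, fun hv => by simpa using congrFun hv 3,
    fun _ => eq_zero_of_Emat'_zero_mulVec_eq_pi_sq_add_one_smul (by norm_num),
    fun _ => eq_zero_of_Emat'_zero_mulVec_eq_pi_sq_add_one_smul (by norm_num)⟩
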